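/- Let h(r) = 3/(4r^2) + r^2/16 - 1/2 + r^2/(4(e^{r^2/4} - 1 - r^2/4)) for r > 0. Then there exists a constant C > 0 such that h(r) ≥ C^{-1}(1/r^2 + r^2) for all r > 0. -/

import Mathlib

open Real

noncomputable def hFun (r : ℝ) : ℝ :=
  3 / (4 * r ^ 2) + r ^ 2 / 16 - 1 / 2 +
    r ^ 2 / (4 * (Real.exp (r ^ 2 / 4) - 1 - r ^ 2 / 4))

lemma exp_le_quartic (u : ℝ) (h0 : 0 ≤ u) (h4 : u < 4) :
    Real.exp u ≤ 256 / (4 - u) ^ 4 := by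
  have hq : (0:ℝ) < 4 - u := by linarith
  have h1 : Real.exp (u / 4) ≤ 4 / (4 - u) := by
    have h2 := Real.add_one_le_exp (-(u / 4))
    have h3 : 0 < Real.exp (u / 4) := Real.exp_pos _
    have h5 : Real.exp (u / 4) * Real.exp (-(u / 4)) = 1 := by
      rw [← Real.exp_add]; simp
    have h6 : Real.exp (u / 4) * (-(u / 4) + 1) ≤ 1 := by
      calc Real.exp (u / 4) * (-(u / 4) + 1)
          ≤ Real.exp (u / 4) * Real.exp (-(u / 4)) :=
            mul_le_mul_of_nonneg_left h2 h3.le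
        _ = 1 := h5
    rw [le_div_iff₀ hq]
    nlinarith [h6]
  have h7 : Real.exp u = Real.exp (u / 4) ^ 4 := by
    rw [← Real.exp_nat_mul]
    norm_num
    ring
  rw [h7]
  calc Real.exp (u / 4) ^ 4 ≤ (4 / (4 - u)) ^ 4 :=
        pow_le_pow_left₀ (Real.exp_pos _).le h1 4
    _ = 256 / (4 - u) ^ 4 := by rw [div_pow]; norm_num

lemma key (u : ℝ) (hu : 0 < u) :
    (100:ℝ)⁻¹ * (1 / (4 * u) + 4 * u) ≤
      3 / (16 * u) + u / 4 - 1 / 2 + u / (Real.exp u - 1 - u) := by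
  have hD : 0 < Real.exp u - 1 - u := by
    have := Real.add_one_lt_exp (ne_of_gt hu)
    linarith
  rcases le_or_gt 2 u with h2 | h2
  · -- large u : drop the exponential term
    have hpos : 0 ≤ u / (Real.exp u - 1 - u) := div_nonneg hu.le hD.le
    have hmain : 0 ≤ 3 / (16 * u) + u / 4 - 1 / 2 - (100:ℝ)⁻¹ * (1 / (4 * u) + 4 * u) := by
      have heq : 3 / (16 * u) + u / 4 - 1 / 2 - (100:ℝ)⁻¹ * (1 / (4 * u) + 4 * u)
          = (37 / 200 + 21 / 100 * u ^ 2 - 1 / 2 * u) / u := by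
        field_simp
        ring
      rw [heq]
      apply div_nonneg _ hu.le
      nlinarith [sq_nonneg (u - 2)]
    linarith
  · -- small u : use the quartic upper bound for exp
    have h4 : (0:ℝ) < 4 - u := by linarith
    have hP : 0 < 160 - 80 * u + 15 * u ^ 2 - u ^ 3 := by nlinarith
    have hub : Real.exp u ≤ 256 / (4 - u) ^ 4 := exp_le_quartic u hu.le (by linarith)
    have hDub : Real.exp u - 1 - u ≤
        u ^ 2 * (160 - 80 * u + 15 * u ^ 2 - u ^ 3) / (4 - u) ^ 4 := by
      have he : 256 / (4 - u) ^ 4 - 1 - u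
          = u ^ 2 * (160 - 80 * u + 15 * u ^ 2 - u ^ 3) / (4 - u) ^ 4 := by
        field_simp
        ring
      linarith
    have hfrac : (4 - u) ^ 4 / (u * (160 - 80 * u + 15 * u ^ 2 - u ^ 3)) ≤
        u / (Real.exp u - 1 - u) := by
      have hq4 : (0:ℝ) < (4 - u) ^ 4 := by positivity
      rw [div_le_div_iff₀ (by positivity) hD]
      have h6 := mul_le_mul_of_nonneg_left hDub hq4.le
      have h7 : (4 - u) ^ 4 * (u ^ 2 * (160 - 80 * u + 15 * u ^ 2 - u ^ 3) / (4 - u) ^ 4)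
          = u * (u * (160 - 80 * u + 15 * u ^ 2 - u ^ 3)) := by
        field_simp
      nlinarith [h6, h7]
    have hQ : 0 ≤ 1428 / 5 - 1754 / 5 * u + 1379 / 8 * u ^ 2 - 8097 / 200 * u ^ 3
        + 93 / 20 * u ^ 4 - 21 / 100 * u ^ 5 := by
      nlinarith [sq_nonneg u, sq_nonneg (u - 2), mul_pos hu (mul_pos hu hu),
        mul_nonneg (mul_nonneg hu.le hu.le) (by linarith : (0:ℝ) ≤ 2 - u),
        mul_nonneg (mul_nonneg (mul_nonneg hu.le hu.le) hu.le) (by linarith : (0:ℝ) ≤ 2 - u),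
        mul_nonneg (mul_nonneg (mul_nonneg (mul_nonneg hu.le hu.le) hu.le) hu.le)
          (by linarith : (0:ℝ) ≤ 2 - u)]
    have heq : 3 / (16 * u) + u / 4 - 1 / 2
        + (4 - u) ^ 4 / (u * (160 - 80 * u + 15 * u ^ 2 - u ^ 3))
        - (100:ℝ)⁻¹ * (1 / (4 * u) + 4 * u)
        = (1428 / 5 - 1754 / 5 * u + 1379 / 8 * u ^ 2 - 8097 / 200 * u ^ 3
            + 93 / 20 * u ^ 4 - 21 / 100 * u ^ 5)
          / (u * (160 - 80 * u + 15 * u ^ 2 - u ^ 3)) := by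
      rw [eq_div_iff (by positivity)]
      generalize hp : 160 - 80 * u + 15 * u ^ 2 - u ^ 3 = P at hP ⊢
      field_simp
      rw [← hp]
      ring
    have hQdiv : 0 ≤ (1428 / 5 - 1754 / 5 * u + 1379 / 8 * u ^ 2 - 8097 / 200 * u ^ 3
            + 93 / 20 * u ^ 4 - 21 / 100 * u ^ 5)
          / (u * (160 - 80 * u + 15 * u ^ 2 - u ^ 3)) :=
      div_nonneg hQ (by positivity)
    linarith

theorem stmt_3 :
    ∃ C : ℝ, 0 < C ∧ ∀ r : ℝ, 0 < r → hFun r ≥ C⁻¹ * (1 / r ^ 2 + r ^ 2) := by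
  refine ⟨100, by norm_num, fun r hr => ?_⟩
  have hu : 0 < r ^ 2 / 4 := by positivity
  have hk := key (r ^ 2 / 4) hu
  have h1 : hFun r = 3 / (16 * (r ^ 2 / 4)) + (r ^ 2 / 4) / 4 - 1 / 2 +
      (r ^ 2 / 4) / (Real.exp (r ^ 2 / 4) - 1 - r ^ 2 / 4) := by
    have hE : 0 < Real.exp (r ^ 2 / 4) - 1 - r ^ 2 / 4 := by
      have := Real.add_one_lt_exp (ne_of_gt hu)
      linarith
    unfold hFun
    field_simp
    ring
  have h2 : (100:ℝ)⁻¹ * (1 / r ^ 2 + r ^ 2) =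
      (100:ℝ)⁻¹ * (1 / (4 * (r ^ 2 / 4)) + 4 * (r ^ 2 / 4)) := by
    ring
  rw [ge_iff_le, h1, h2]
  exact hk
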